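/- arXiv:0801.1265 — 2 statements merged into one kernel-verified Lean document; each statement's English description precedes it below -/
import Mathlib

section
/- Let N ≥ 1 and let Q be any coherent lower prevision on ℒ(𝒩^N). Then the lower prevision P on ℒ(𝒳^N) defined by P(f) := Q(m ↦ MuHy^N(f|m)) is coherent and exchangeable, and its count distribution h ↦ P(h∘T^N) coincides with Q. -/
open Finset Filter Topology

/-- A coherent lower prevision on the gambles over a finite nonempty space `Ω`. -/
def LowerPrevCoherent {Ω : Type*} [Fintype Ω] [Nonempty Ω] (P : (Ω → ℝ) → ℝ) : Prop :=
  (∀ f : Ω → ℝ, sInf (Set.range f) ≤ P f) ∧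
  (∀ (f : Ω → ℝ) (l : ℝ), 0 ≤ l → P (fun ω => l * f ω) = l * P f) ∧
  (∀ f g : Ω → ℝ, P f + P g ≤ P (f + g))

/-- A linear prevision on the gambles over a finite nonempty space `Ω`. -/
def LinearPrevision {Ω : Type*} [Fintype Ω] [Nonempty Ω] (P : (Ω → ℝ) → ℝ) : Prop :=
  (∀ f g : Ω → ℝ, P (f + g) = P f + P g) ∧
  (∀ (l : ℝ) (f : Ω → ℝ), P (fun ω => l * f ω) = l * P f) ∧
  (∀ f : Ω → ℝ, (∀ ω, 0 ≤ f ω) → 0 ≤ P f) ∧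
  P (fun _ => 1) = 1

/-- Exchangeability of a lower prevision on gambles on `X^N`:
`P (πf − f) ≥ 0` for every gamble `f` and every permutation `π`. -/
def Exchangeable {X : Type*} {N : ℕ} (P : ((Fin N → X) → ℝ) → ℝ) : Prop :=
  ∀ (f : (Fin N → X) → ℝ) (π : Equiv.Perm (Fin N)),
    0 ≤ P (fun x => f (fun k => x (π k)) - f x)

/-- The set of count vectors `𝒩^n`. -/
abbrev CVec (X : Type*) [Fintype X] (n : ℕ) : Type _ := {m : X → ℕ // ∑ x, m x = n}

noncomputable instance {X : Type*} [Fintype X] [DecidableEq X] (n : ℕ) : Fintype (CVec X n) := by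
  have key : ∀ (m : CVec X n) (x : X), m.1 x < n + 1 := by
    intro m x
    have h1 : m.1 x ≤ ∑ y, m.1 y :=
      Finset.single_le_sum (fun i _ => Nat.zero_le _) (Finset.mem_univ x)
    have h2 := m.2
    omega
  exact Fintype.ofInjective (fun m : CVec X n => fun x => (⟨m.1 x, key m x⟩ : Fin (n+1)))
    (fun a b hab => Subtype.ext (funext fun x => congrArg Fin.val (congrFun hab x)))

instance {X : Type*} [Fintype X] [DecidableEq X] [Nonempty X] (n : ℕ) :
    Nonempty (CVec X n) :=
  ⟨⟨fun x => if x = Classical.arbitrary X then n else 0, by simp⟩⟩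

/-- The counting map `T^n : X^n → 𝒩^n`. -/
def countMap {X : Type*} [Fintype X] [DecidableEq X] (n : ℕ) (z : Fin n → X) : CVec X n :=
  ⟨fun x => (Finset.univ.filter fun k => z k = x).card, by
    have h := Finset.card_eq_sum_card_fiberwise (f := z) (s := Finset.univ) (t := Finset.univ)
      (fun k _ => Finset.mem_univ (z k))
    simpa using h.symm⟩

/-- `ν(m) = n!/∏ₓ mₓ!` for a count vector `m ∈ 𝒩^n`. -/
def nu {X : Type*} [Fintype X] {n : ℕ} (m : CVec X n) : ℕ :=
  Nat.multinomial Finset.univ m.1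

/-- `ν(μ − m)`, which is `0` unless `m ≤ μ` componentwise. -/
def nuSub {X : Type*} [Fintype X] {n k : ℕ} (μ : CVec X (n + k)) (m : CVec X n) : ℕ :=
  if ∀ x, m.1 x ≤ μ.1 x then Nat.multinomial Finset.univ (fun x => μ.1 x - m.1 x) else 0

/-- The multiple hyper-geometric prevision `MuHy^n(f|m) = (1/ν(m)) ∑_{z∈[m]} f(z)`. -/
noncomputable def MuHy {X : Type*} [Fintype X] [DecidableEq X] {n : ℕ}
    (f : (Fin n → X) → ℝ) (m : CVec X n) : ℝ :=
  (∑ z ∈ Finset.univ.filter fun z : Fin n → X => countMap n z = m, f z) / (nu m : ℝ)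

/-- The `X`-simplex `Σ_X`, as a subtype of `X → ℝ`. -/
abbrev SimplexPt (X : Type*) [Fintype X] : Type _ :=
  {θ : X → ℝ // (∀ x, 0 ≤ θ x) ∧ ∑ x, θ x = 1}

/-- The Bernstein basis polynomial `B_m(θ) = ν(m) ∏ₓ θₓ^{mₓ}`. -/
noncomputable def Bern {X : Type*} [Fintype X] {n : ℕ} (m : CVec X n) (θ : X → ℝ) : ℝ :=
  (nu m : ℝ) * ∏ x, θ x ^ m.1 x

/-- The count multinomial expectation `CoMn^n(g|θ) = ∑_m g(m) B_m(θ)`. -/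
noncomputable def CoMn {X : Type*} [Fintype X] [DecidableEq X] {n : ℕ} (g : CVec X n → ℝ) (θ : X → ℝ) : ℝ :=
  ∑ m : CVec X n, g m * Bern m θ

/-- The multinomial expectation `Mn^n(f|θ) = ∑_z f(z) ∏ₓ θₓ^{Tₓ(z)}`. -/
noncomputable def Mn {X : Type*} [Fintype X] [DecidableEq X] {n : ℕ}
    (f : (Fin n → X) → ℝ) (θ : X → ℝ) : ℝ :=
  ∑ z : Fin n → X, f z * ∏ x, θ x ^ (countMap n z).1 x

/-- `CoMn^n(g|·)` as a function on the simplex. -/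
noncomputable def CoMnP {X : Type*} [Fintype X] [DecidableEq X] {n : ℕ} (g : CVec X n → ℝ)
    (θ : SimplexPt X) : ℝ :=
  CoMn g θ.1

/-- `Mn^n(f|·)` as a function on the simplex. -/
noncomputable def MnP {X : Type*} [Fintype X] [DecidableEq X] {n : ℕ}
    (f : (Fin n → X) → ℝ) (θ : SimplexPt X) : ℝ :=
  Mn f θ.1

/-- Polynomial gambles on the simplex: the set `𝒱(Σ_X)`. -/
def IsPolyGamble {X : Type*} [Fintype X] [DecidableEq X] (p : SimplexPt X → ℝ) : Prop :=
  ∃ n : ℕ, 1 ≤ n ∧ ∃ g : CVec X n → ℝ, p = fun θ => CoMnP g θ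

/-- Coherence of a functional on the linear space `𝒱(Σ_X)` of polynomial gambles. -/
def CoherentOnPoly {X : Type*} [Fintype X] [DecidableEq X] (S : (SimplexPt X → ℝ) → ℝ) : Prop :=
  (∀ p, IsPolyGamble p → sInf (Set.range p) ≤ S p) ∧
  (∀ p, IsPolyGamble p → ∀ l : ℝ, 0 ≤ l → S (fun θ => l * p θ) = l * S p) ∧
  (∀ p q, IsPolyGamble p → IsPolyGamble q → S p + S q ≤ S (p + q))

/-- Cylindrical extension of a gamble on `X^n` to `X^{n+k}`. -/
def cylExt {X : Type*} {n k : ℕ} (f : (Fin n → X) → ℝ) : (Fin (n + k) → X) → ℝ :=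
  fun z => f fun i => z (Fin.castLE (Nat.le_add_right n k) i)

/-- Time consistency of a family of lower previsions on the `X^n`. -/
def PTimeConsistent {X : Type*} (P : ∀ n : ℕ, ((Fin n → X) → ℝ) → ℝ) : Prop :=
  ∀ n : ℕ, 1 ≤ n → ∀ (k : ℕ) (f : (Fin n → X) → ℝ), P n f = P (n + k) (cylExt f)

/-- Time consistency of a family of count lower previsions on the `𝒩^n`. -/
def QTimeConsistent {X : Type*} [Fintype X] [DecidableEq X] (Q : ∀ n : ℕ, (CVec X n → ℝ) → ℝ) : Prop :=
  ∀ n : ℕ, 1 ≤ n → ∀ (k : ℕ) (h : CVec X n → ℝ),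
    Q n h = Q (n + k) (fun μ => ∑ m : CVec X n, ((nuSub μ m : ℝ) * (nu m : ℝ) / (nu μ : ℝ)) * h m)

/-- The relative frequency vector `m/n ∈ Σ_X` of a count vector `m ∈ 𝒩^n`, `n ≥ 1`. -/
noncomputable def freqPt {X : Type*} [Fintype X] {n : ℕ} (hn : 0 < n) (m : CVec X n) :
    SimplexPt X :=
  ⟨fun x => (m.1 x : ℝ) / n,
   fun x => div_nonneg (Nat.cast_nonneg _) (Nat.cast_nonneg _),
   by
    rw [← Finset.sum_div]
    have h : (∑ x, (m.1 x : ℝ)) = (n : ℝ) := by exact_mod_cast m.2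
    rw [h]
    exact div_self (Nat.cast_ne_zero.mpr hn.ne')⟩

/-- `ḡ(μ) = ∑_m (ν(m) ν(μ−m) / ν(μ)) g(m)`. -/
noncomputable def gbar {X : Type*} [Fintype X] [DecidableEq X] {n k : ℕ}
    (g : CVec X n → ℝ) (μ : CVec X (n + k)) : ℝ :=
  ∑ m : CVec X n, ((nu m : ℝ) * (nuSub μ m : ℝ) / (nu μ : ℝ)) * g m

/-!
`MuHy^N(·|m)` is the uniform average over the invariant atom `[m]`, which has `ν(m)` elements.
Hence `f ↦ MuHy^N(f|·)` is a linear map that keeps every value above `min f`, and composing a coherent `Q` with such a map stays coherent. Permuting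
coordinates maps each atom `[m]` onto itself, so `MuHy^N(πf − f|·) = 0`; and a gamble `h ∘ T^N`
is constant, equal to `h m`, on `[m]`.
-/

namespace CVec

variable {X : Type*} [Fintype X] {n : ℕ}

noncomputable def toFinsupp (m : CVec X n) : X →₀ ℕ := Finsupp.equivFunOnFinite.symm m.1

lemma toFinsupp_injective : Function.Injective (toFinsupp : CVec X n → X →₀ ℕ) :=
  fun _ _ h => Subtype.ext (Finsupp.equivFunOnFinite.symm.injective h)

lemma toFinsupp_sum_eq (m : CVec X n) : m.toFinsupp.sum (fun _ k => k) = n := by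
  rw [Finsupp.sum_fintype _ _ fun _ => rfl]
  exact m.2

lemma toFinsupp_multinomial (m : CVec X n) : m.toFinsupp.multinomial = nu m :=
  (Finsupp.multinomial_eq_of_support_subset (Finset.subset_univ _)).trans rfl

variable [DecidableEq X]

lemma sum_single_eq_toFinsupp_countMap (z : Fin n → X) :
    ∑ k, Finsupp.single (z k) 1 = (countMap n z).toFinsupp := by
  ext x
  rw [Finsupp.finsetSum_apply]
  simp only [toFinsupp, countMap, Finsupp.single_apply, Finset.card_filter]
  simp

lemma prod_X_eq_monomial_countMap (z : Fin n → X) :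
    ∏ k, (MvPolynomial.X (z k) : MvPolynomial X ℕ) =
      MvPolynomial.monomial (countMap n z).toFinsupp 1 := by
  simp only [MvPolynomial.X, ← MvPolynomial.monomial_sum_one, sum_single_eq_toFinsupp_countMap]

end CVec

section MuHy

open CVec

variable {X : Type*} [Fintype X] [DecidableEq X] {n : ℕ}

/-- Expanding `(∑ₓ Xₓ)ⁿ` as a sum over words `z` and as a multinomial sum, the coefficient of
`∏ₓ Xₓ ^ mₓ` counts the words with counts `m` on one side and is `ν(m)` on the other. -/
lemma card_filter_countMap_eq_nu (m : CVec X n) : #{z : Fin n → X | countMap n z = m} = nu m :=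
  calc #{z : Fin n → X | countMap n z = m}
      = ((∑ x, MvPolynomial.X x : MvPolynomial X ℕ) ^ n).coeff m.toFinsupp := by
        rw [← Fin.prod_const, Finset.prod_univ_sum, MvPolynomial.coeff_sum]
        simp [prod_X_eq_monomial_countMap, MvPolynomial.coeff_monomial,
          toFinsupp_injective.eq_iff]
    _ = nu m := by
        rw [MvPolynomial.coeff_sum_X_pow_of_fintype, if_pos (toFinsupp_sum_eq m),
          toFinsupp_multinomial, Nat.cast_id]

lemma countMap_comp_perm (z : Fin n → X) (π : Equiv.Perm (Fin n)) :
    countMap n (fun k => z (π k)) = countMap n z := by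
  ext x
  simp only [countMap, Finset.card_filter]
  exact Equiv.sum_comp π fun k => if z k = x then 1 else 0

lemma MuHy_add (f g : (Fin n → X) → ℝ) (m : CVec X n) :
    MuHy (f + g) m = MuHy f m + MuHy g m := by
  simp only [MuHy, Pi.add_apply, Finset.sum_add_distrib, add_div]

lemma MuHy_sub (f g : (Fin n → X) → ℝ) (m : CVec X n) :
    MuHy (f - g) m = MuHy f m - MuHy g m := by
  simp only [MuHy, Pi.sub_apply, Finset.sum_sub_distrib, sub_div]

lemma MuHy_smul (l : ℝ) (f : (Fin n → X) → ℝ) (m : CVec X n) :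
    MuHy (l • f) m = l * MuHy f m := by
  simp only [MuHy, Pi.smul_apply, smul_eq_mul, ← Finset.mul_sum, mul_div_assoc]

noncomputable def muHyLinearMap : ((Fin n → X) → ℝ) →ₗ[ℝ] (CVec X n → ℝ) where
  toFun f m := MuHy f m
  map_add' f g := funext (MuHy_add f g)
  map_smul' l f := funext (MuHy_smul l f)

lemma MuHy_comp_countMap (h : CVec X n → ℝ) (m : CVec X n) :
    MuHy (fun z => h (countMap n z)) m = h m := by
  have hν : (nu m : ℝ) ≠ 0 := by exact_mod_cast (Nat.multinomial_pos _ _).ne'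
  rw [MuHy, Finset.sum_congr rfl fun z hz => congrArg h (Finset.mem_filter.mp hz).2,
    Finset.sum_const, card_filter_countMap_eq_nu, nsmul_eq_mul, mul_div_cancel_left₀ _ hν]

lemma sInf_range_le_MuHy (f : (Fin n → X) → ℝ) (m : CVec X n) :
    sInf (Set.range f) ≤ MuHy f m := by
  have hν : (0 : ℝ) < nu m := by exact_mod_cast Nat.multinomial_pos _ _
  rw [MuHy, le_div_iff₀ hν, ← card_filter_countMap_eq_nu, mul_comm, ← nsmul_eq_mul]
  exact Finset.card_nsmul_le_sum _ _ _ fun z _ => csInf_le (Set.finite_range f).bddBelow ⟨z, rfl⟩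

lemma MuHy_comp_perm (f : (Fin n → X) → ℝ) (π : Equiv.Perm (Fin n)) (m : CVec X n) :
    MuHy (fun z => f fun k => z (π k)) m = MuHy f m := by
  simp only [MuHy, Finset.sum_filter]
  congr 1
  refine Fintype.sum_equiv (Equiv.piCongrLeft' (fun _ => X) π.symm) _ _ fun z => ?_
  change _ = if countMap n (fun k => z (π k)) = m then f (fun k => z (π k)) else 0
  rw [countMap_comp_perm]

lemma MuHy_perm_sub_self (f : (Fin n → X) → ℝ) (π : Equiv.Perm (Fin n)) (m : CVec X n) :
    MuHy (fun z => f (fun k => z (π k)) - f z) m = 0 := by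
  have h := MuHy_sub (fun z => f fun k => z (π k)) f m
  rwa [MuHy_comp_perm, sub_self] at h

end MuHy

namespace LowerPrevCoherent

variable {Ω : Type*} [Fintype Ω] [Nonempty Ω] {Q : (Ω → ℝ) → ℝ}

lemma map_zero (hQ : LowerPrevCoherent Q) : Q 0 = 0 := by
  simpa [← Pi.zero_def] using hQ.2.1 0 0 le_rfl

lemma comp_linearMap {Ω' : Type*} [Fintype Ω'] [Nonempty Ω'] (hQ : LowerPrevCoherent Q)
    (T : (Ω' → ℝ) →ₗ[ℝ] (Ω → ℝ)) (hT : ∀ f ω, sInf (Set.range f) ≤ T f ω) :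
    LowerPrevCoherent fun f => Q (T f) := by
  refine ⟨fun f => ?_, fun f l hl => ?_, fun f g => ?_⟩
  · exact (le_csInf (Set.range_nonempty _) (Set.forall_mem_range.mpr (hT f))).trans (hQ.1 _)
  · exact (congrArg Q (T.map_smul l f)).trans (hQ.2.1 _ l hl)
  · simpa only [map_add] using hQ.2.2 (T f) (T g)

end LowerPrevCoherent

theorem stmt5_general {X : Type*} [Fintype X] [DecidableEq X] [Nonempty X] {N : ℕ}
    (Q : (CVec X N → ℝ) → ℝ) (hQ : LowerPrevCoherent Q)
    (P : ((Fin N → X) → ℝ) → ℝ)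
    (hP : ∀ f : (Fin N → X) → ℝ, P f = Q (fun m => MuHy f m)) :
    LowerPrevCoherent P ∧ Exchangeable P ∧
      ∀ h : CVec X N → ℝ, P (fun z => h (countMap N z)) = Q h := by
  obtain rfl : P = fun f => Q (muHyLinearMap f) := funext hP
  refine ⟨hQ.comp_linearMap muHyLinearMap sInf_range_le_MuHy, fun f π => ?_, fun h => ?_⟩
  · dsimp only
    rw [show muHyLinearMap (fun z => f (fun k => z (π k)) - f z) = 0 from
      funext (MuHy_perm_sub_self f π), hQ.map_zero]
  · exact congrArg Q (funext (MuHy_comp_countMap h))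

/-- for any coherent `Q` on `ℒ(𝒩^N)`, the lower prevision
`P(f) := Q(MuHy^N(f|·))` is coherent and exchangeable, with count distribution `Q`. -/
theorem stmt5 {X : Type*} [Fintype X] [DecidableEq X] [Nonempty X] {N : ℕ} (hN : 1 ≤ N)
    (Q : (CVec X N → ℝ) → ℝ) (hQ : LowerPrevCoherent Q)
    (P : ((Fin N → X) → ℝ) → ℝ)
    (hP : ∀ f : (Fin N → X) → ℝ, P f = Q (fun m => MuHy f m)) :
    LowerPrevCoherent P ∧ Exchangeable P ∧
      ∀ h : CVec X N → ℝ, P (fun z => h (countMap N z)) = Q h :=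
  stmt5_general Q hQ P hP
end

section
/- Let (Q^n)_{n≥1} be a time consistent family of coherent lower previsions on ℒ(𝒩^n). Then there is a well-defined functional S on the set 𝒱(Σ_𝒳) of polynomial gambles, given by S(p) := Q^n(b) whenever p(θ) = Σ_{m∈𝒩^n} b(m)B_m(θ) for all θ ∈ Σ_𝒳, and S is a coherent lower prevision on the linear space 𝒱(Σ_𝒳): for all p, q ∈ 𝒱(Σ_𝒳) and all real λ ≥ 0, S(p) ≥ min_{θ∈Σ_𝒳} p(θ), S(λp) = λS(p), and S(p+q) ≥ S(p)+S(q). -/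
open Finset Filter Topology

/-!
By time consistency `Q^n(g) = Q^{n+k}(ḡ)`, where `ḡ` are the Bernstein coefficients in degree
`n + k` of the polynomial `p = ∑ g(m) B_m`. These coefficients are hypergeometric averages of `g`,
while `p(μ/(n+k))` is the corresponding multinomial average; drawing with and without replacement
differ by `O(n²/(n+k))`, so `min ḡ ≥ min p - ε` for large `k` and coherence of `Q^{n+k}` yields
`Q^n(g) ≥ min p`. Applied to differences of two representations lifted to a common degree, this
shows that `Q^n(b)` depends only on the polynomial, and the coherence axioms pass from the `Q^n`
to `S`.
-/

theorem abs_prod_sub_prod_le {ι : Type*} (s : Finset ι) {a b : ι → ℝ}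
    (ha : ∀ i ∈ s, |a i| ≤ 1) (hb : ∀ i ∈ s, |b i| ≤ 1) :
    |∏ i ∈ s, a i - ∏ i ∈ s, b i| ≤ ∑ i ∈ s, |a i - b i| := by
  classical
  induction s using Finset.induction_on with
  | empty => simp
  | insert x s hx ih =>
    simp only [Finset.forall_mem_insert] at ha hb
    rw [prod_insert hx, prod_insert hx, sum_insert hx]
    have hA : |∏ i ∈ s, a i| ≤ 1 := by
      rw [abs_prod]; exact prod_le_one (fun i _ => abs_nonneg _) ha.2
    calc |a x * ∏ i ∈ s, a i - b x * ∏ i ∈ s, b i|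
        = |(a x - b x) * ∏ i ∈ s, a i + b x * (∏ i ∈ s, a i - ∏ i ∈ s, b i)| := by ring_nf
      _ ≤ |a x - b x| * 1 + 1 * ∑ i ∈ s, |a i - b i| := by
        refine (abs_add_le _ _).trans ?_
        rw [abs_mul, abs_mul]
        gcongr
        exacts [hb.1, ih ha.2 hb.2]
      _ = _ := by ring

theorem abs_prod_sub_sub_prod_le {ι : Type*} (s : Finset ι) {t c : ι → ℝ} {δ : ℝ}
    (ht : ∀ i ∈ s, 0 ≤ t i ∧ t i ≤ 1) (hc : ∀ i ∈ s, 0 ≤ c i ∧ c i ≤ δ) (hδ : δ ≤ 1) :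
    |∏ i ∈ s, (t i - c i) - ∏ i ∈ s, t i| ≤ #s * δ := by
  refine (abs_prod_sub_prod_le s (fun i hi => ?_) fun i hi => ?_).trans ?_
  · obtain ⟨ht0, ht1⟩ := ht i hi; obtain ⟨hc0, hc1⟩ := hc i hi
    exact abs_le.2 ⟨by linarith, by linarith⟩
  · obtain ⟨ht0, ht1⟩ := ht i hi
    exact abs_le.2 ⟨by linarith, ht1⟩
  · rw [← nsmul_eq_mul]
    refine sum_le_card_nsmul _ _ _ fun i hi => ?_
    simpa [abs_of_nonneg (hc i hi).1] using (hc i hi).2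

theorem abs_div_sub_le {A B R e : ℝ} (hA : |A - B| ≤ e) (hR : |R - 1| ≤ e) (hB : |B| ≤ 1)
    (he : e ≤ 1 / 2) : |A / R - B| ≤ 4 * e := by
  have hR0 : 1 / 2 ≤ R := by linarith [(abs_le.1 hR).1]
  have hnum : |A - B * R| ≤ 2 * e := calc
    |A - B * R| = |(A - B) + B * (1 - R)| := by ring_nf
    _ ≤ e + 1 * e := by
      refine (abs_add_le _ _).trans (add_le_add hA ?_)
      rw [abs_mul, abs_sub_comm]
      exact mul_le_mul hB hR (abs_nonneg _) zero_le_one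
    _ = 2 * e := by ring
  have he0 : 0 ≤ e := (abs_nonneg _).trans hA
  rw [show A / R - B = (A - B * R) / R by field_simp, abs_div, abs_of_pos (show 0 < R by linarith),
    div_le_iff₀ (by linarith)]
  nlinarith

theorem Nat.cast_descFactorial_div_pow (a j : ℕ) (N : ℝ) :
    (a.descFactorial j : ℝ) / N ^ j = ∏ i ∈ range j, (a / N - i / N) := by
  rw [← descPochhammer_eval_eq_descFactorial, descPochhammer_eval_eq_prod_range,
    ← card_range j, ← prod_const, card_range, ← prod_div_distrib]
  exact prod_congr rfl fun i _ => sub_div _ _ _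

section Hypergeometric

variable {X : Type*} [Fintype X]

theorem CVec.apply_le {n : ℕ} (m : CVec X n) (x : X) : m.1 x ≤ n :=
  (single_le_sum (f := m.1) (fun _ _ => Nat.zero_le _) (mem_univ x)).trans_eq m.2

theorem nu_pos {n : ℕ} (m : CVec X n) : 0 < nu m := Nat.multinomial_pos _ _

theorem nuSub_mul_descFactorial {n k : ℕ} (μ : CVec X (n + k)) (m : CVec X n) :
    nuSub μ m * (n + k).descFactorial n = nu μ * ∏ x, (μ.1 x).descFactorial (m.1 x) := by
  by_cases hm : ∀ x, m.1 x ≤ μ.1 x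
  · have hk : ∑ x, (μ.1 x - m.1 x) = k := by
      rw [sum_tsub_distrib _ fun x _ => hm x, μ.2, m.2, Nat.add_sub_cancel_left]
    have hsub := Nat.multinomial_spec univ fun x => μ.1 x - m.1 x
    have hμ := Nat.multinomial_spec univ μ.1
    have hN := Nat.factorial_mul_descFactorial (Nat.le_add_right n k)
    rw [hk] at hsub
    rw [μ.2] at hμ
    rw [Nat.add_sub_cancel_left] at hN
    refine Nat.eq_of_mul_eq_mul_left
      (prod_pos (s := univ) fun x _ => Nat.factorial_pos (μ.1 x - m.1 x)) ?_
    calc (∏ x, (μ.1 x - m.1 x).factorial) * (nuSub μ m * (n + k).descFactorial n)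
        = (n + k).factorial := by rw [nuSub, if_pos hm, ← mul_assoc, hsub, hN]
      _ = (∏ x, (μ.1 x - m.1 x).factorial * (μ.1 x).descFactorial (m.1 x)) * nu μ := by
        rw [← hμ, nu]
        congr 1
        exact prod_congr rfl fun x _ => (Nat.factorial_mul_descFactorial (hm x)).symm
      _ = _ := by rw [prod_mul_distrib]; ring
  · obtain ⟨x, hx⟩ := not_forall.1 hm
    rw [nuSub, if_neg hm, zero_mul,
      prod_eq_zero (mem_univ x) (Nat.descFactorial_eq_zero_iff_lt.2 (not_le.1 hx)), mul_zero]

/-- The coefficient `ν(m) ν(μ − m) / ν(μ)` is the hypergeometric probability of drawing the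
counts `m` in `n` draws without replacement from an urn with composition `μ`. -/
theorem nu_mul_nuSub_div_nu {n k : ℕ} (μ : CVec X (n + k)) (m : CVec X n) :
    (nu m * nuSub μ m / nu μ : ℝ)
      = nu m * ((∏ x, ((μ.1 x).descFactorial (m.1 x) : ℝ)) / (n + k).descFactorial n) := by
  have hμ : (nu μ : ℝ) ≠ 0 := Nat.cast_ne_zero.2 (nu_pos μ).ne'
  have hD : ((n + k).descFactorial n : ℝ) ≠ 0 :=
    Nat.cast_ne_zero.2 (Nat.descFactorial_pos.2 (Nat.le_add_right n k)).ne'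
  have key := congrArg (Nat.cast : ℕ → ℝ) (nuSub_mul_descFactorial μ m)
  push_cast at key
  field_simp
  linear_combination (nu m : ℝ) * key

theorem freqPt_apply_le_one {n : ℕ} (hn : 0 < n) (μ : CVec X n) (x : X) :
    (freqPt hn μ).1 x ≤ 1 :=
  div_le_one_of_le₀ (Nat.cast_le.2 (μ.apply_le x)) (Nat.cast_nonneg n)

theorem nu_mul_nuSub_div_nu_eq_freqPt {n k : ℕ} (hpos : 0 < n + k) (μ : CVec X (n + k))
    (m : CVec X n) :
    (nu m * nuSub μ m / nu μ : ℝ) = nu m *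
      ((∏ x, ∏ i ∈ range (m.1 x), ((freqPt hpos μ).1 x - i / (n + k : ℕ))) /
        ∏ j ∈ range n, (1 - (j : ℝ) / (n + k : ℕ))) := by
  have hN0 : ((n + k : ℕ) : ℝ) ≠ 0 := Nat.cast_ne_zero.2 hpos.ne'
  rw [nu_mul_nuSub_div_nu, ← div_div_div_cancel_right₀ (pow_ne_zero n hN0),
    Nat.cast_descFactorial_div_pow, div_self hN0]
  have hpow : ((n + k : ℕ) : ℝ) ^ n = ∏ x, ((n + k : ℕ) : ℝ) ^ m.1 x := by
    rw [prod_pow_eq_pow_sum, m.2]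
  simp_rw [hpow, ← prod_div_distrib, Nat.cast_descFactorial_div_pow]
  rfl

theorem abs_nu_mul_nuSub_div_nu_sub_bern_le {n k : ℕ} (hpos : 0 < n + k)
    (hN : 2 * n ^ 2 ≤ n + k) (μ : CVec X (n + k)) (m : CVec X n) :
    |(nu m * nuSub μ m / nu μ : ℝ) - Bern m (freqPt hpos μ).1|
      ≤ nu m * (4 * (n ^ 2 / (n + k : ℕ))) := by
  set N : ℝ := ((n + k : ℕ) : ℝ) with hNdef
  have hN0 : 0 < N := Nat.cast_pos.2 hpos
  have hnN : (n : ℝ) ≤ N := Nat.cast_le.2 (Nat.le_add_right n k)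
  have he : (n : ℝ) ^ 2 / N ≤ 1 / 2 := by
    rw [div_le_iff₀ hN0]
    have : (2 * n ^ 2 : ℝ) ≤ N := by rw [hNdef]; exact_mod_cast hN
    linarith
  have hc : ∀ i < n, 0 ≤ (i : ℝ) / N ∧ (i : ℝ) / N ≤ n / N := fun i hi =>
    ⟨by positivity, by gcongr⟩
  have hδ : (n : ℝ) / N ≤ 1 := div_le_one_of_le₀ hnN hN0.le
  have hsq : (n : ℝ) * (n / N) = n ^ 2 / N := by ring
  set θ := freqPt hpos μ
  set A := ∏ x, ∏ i ∈ range (m.1 x), (θ.1 x - i / N)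
  set R := ∏ j ∈ range n, (1 - (j : ℝ) / N)
  set B := ∏ x, θ.1 x ^ m.1 x
  have hAB : |A - B| ≤ n ^ 2 / N := by
    have key := abs_prod_sub_sub_prod_le (univ.sigma fun x => range (m.1 x))
      (t := fun p => θ.1 p.1) (c := fun p => (p.2 : ℝ) / N)
      (fun p _ => ⟨θ.2.1 p.1, freqPt_apply_le_one hpos μ p.1⟩)
      (fun p hp => hc p.2 ((mem_range.1 (mem_sigma.1 hp).2).trans_le (m.apply_le p.1))) hδ
    simp only [prod_sigma, prod_const, card_range, card_sigma, m.2] at key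
    rwa [hsq] at key
  have hR : |R - 1| ≤ n ^ 2 / N := by
    have key := abs_prod_sub_sub_prod_le (range n) (t := fun _ => 1)
      (fun _ _ => ⟨zero_le_one, le_rfl⟩) (fun j hj => hc j (mem_range.1 hj)) hδ
    rwa [prod_const_one, card_range, hsq] at key
  have hB : |B| ≤ 1 := by
    rw [abs_of_nonneg (prod_nonneg fun x _ => pow_nonneg (θ.2.1 x) _)]
    exact prod_le_one (fun x _ => pow_nonneg (θ.2.1 x) _)
      fun x _ => pow_le_one₀ (θ.2.1 x) (freqPt_apply_le_one hpos μ x)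
  calc |(nu m * nuSub μ m / nu μ : ℝ) - Bern m θ.1| = nu m * |A / R - B| := by
        rw [nu_mul_nuSub_div_nu_eq_freqPt hpos, Bern, ← mul_sub, abs_mul, Nat.abs_cast]
    _ ≤ nu m * (4 * (n ^ 2 / N)) := by gcongr; exact abs_div_sub_le hAB hR hB he

end Hypergeometric

section Bernstein

variable {X : Type*} [Fintype X] [DecidableEq X]

theorem sum_bern_eq_one (k : ℕ) (θ : SimplexPt X) : ∑ κ : CVec X k, Bern κ θ.1 = 1 := by
  have h := sum_pow_eq_sum_piAntidiag (univ : Finset X) θ.1 k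
  rw [θ.2.2, one_pow, sum_subtype (p := fun f : X → ℕ => ∑ x, f x = k) _ (fun f => by simp)
    (fun f => (Nat.multinomial univ f : ℝ) * ∏ x, θ.1 x ^ f x)] at h
  exact h.symm

/-- Degree elevation of the Bernstein basis, from `∏ θ^m = ∏ θ^m (∑ θ)^k`. -/
theorem sum_nuSub_mul_prod_pow {n k : ℕ} (m : CVec X n) (θ : SimplexPt X) :
    ∑ μ : CVec X (n + k), (nuSub μ m : ℝ) * ∏ x, θ.1 x ^ μ.1 x = ∏ x, θ.1 x ^ m.1 x := by
  let shift : CVec X k → CVec X (n + k) := fun κ =>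
    ⟨m.1 + κ.1, by simp only [Pi.add_apply, sum_add_distrib, m.2, κ.2]⟩
  have hshift : shift.Injective := fun κ κ' h =>
    Subtype.ext (add_left_cancel (congrArg Subtype.val h))
  rw [← Fintype.sum_of_injective shift hshift (fun κ => (∏ x, θ.1 x ^ m.1 x) * Bern κ θ.1),
    ← mul_sum, sum_bern_eq_one, mul_one]
  · intro μ hμ
    rw [nuSub, if_neg, Nat.cast_zero, zero_mul]
    refine fun hle => hμ ⟨⟨fun x => μ.1 x - m.1 x, ?_⟩, ?_⟩
    · rw [sum_tsub_distrib _ fun x _ => hle x, μ.2, m.2, Nat.add_sub_cancel_left]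
    · exact Subtype.ext (funext fun x => Nat.add_sub_cancel' (hle x))
  · intro κ
    simp only [shift, nuSub, Bern, nu, Pi.add_apply, le_add_iff_nonneg_right, zero_le,
      implies_true, if_true, add_tsub_cancel_left, pow_add, prod_mul_distrib]
    ring

theorem CoMnP_gbar {n k : ℕ} (g : CVec X n → ℝ) (θ : SimplexPt X) :
    CoMnP (gbar g : CVec X (n + k) → ℝ) θ = CoMnP g θ := by
  have hν : ∀ μ : CVec X (n + k), (nu μ : ℝ) ≠ 0 := fun μ => Nat.cast_ne_zero.2 (nu_pos μ).ne'
  simp only [CoMnP, CoMn, gbar, Bern, sum_mul]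
  rw [sum_comm]
  refine sum_congr rfl fun m _ => ?_
  rw [← sum_nuSub_mul_prod_pow (k := k) m θ, mul_sum, mul_sum]
  refine sum_congr rfl fun μ _ => ?_
  field_simp [hν μ]

theorem CoMnP_add {n : ℕ} (f g : CVec X n → ℝ) (θ : SimplexPt X) :
    CoMnP (f + g) θ = CoMnP f θ + CoMnP g θ := by
  simp only [CoMnP, CoMn, Pi.add_apply, add_mul, sum_add_distrib]

theorem CoMnP_sub {n : ℕ} (f g : CVec X n → ℝ) (θ : SimplexPt X) :
    CoMnP (f - g) θ = CoMnP f θ - CoMnP g θ := by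
  simp only [CoMnP, CoMn, Pi.sub_apply, sub_mul, sum_sub_distrib]

theorem CoMnP_const_mul {n : ℕ} (l : ℝ) (f : CVec X n → ℝ) (θ : SimplexPt X) :
    CoMnP (fun m => l * f m) θ = l * CoMnP f θ := by
  simp only [CoMnP, CoMn, mul_sum, mul_assoc]

theorem le_CoMnP {n : ℕ} {g : CVec X n → ℝ} {c : ℝ} (hg : ∀ m, c ≤ g m) (θ : SimplexPt X) :
    c ≤ CoMnP g θ := calc
  c = ∑ m, c * Bern m θ.1 := by rw [← mul_sum, sum_bern_eq_one, mul_one]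
  _ ≤ CoMnP g θ := sum_le_sum fun m _ => mul_le_mul_of_nonneg_right (hg m)
    (mul_nonneg (Nat.cast_nonneg _) (prod_nonneg fun x _ => pow_nonneg (θ.2.1 x) _))

theorem bddBelow_range_CoMnP {n : ℕ} (g : CVec X n → ℝ) : BddBelow (Set.range (CoMnP g)) := by
  obtain ⟨c, hc⟩ := (Set.finite_range g).bddBelow
  exact ⟨c, Set.forall_mem_range.2 (le_CoMnP fun m => hc ⟨m, rfl⟩)⟩

theorem abs_gbar_sub_CoMnP_freqPt_le {n k : ℕ} (hpos : 0 < n + k) (hN : 2 * n ^ 2 ≤ n + k)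
    (g : CVec X n → ℝ) (μ : CVec X (n + k)) :
    |gbar g μ - CoMnP g (freqPt hpos μ)|
      ≤ (∑ m, |g m| * nu m) * (4 * (n ^ 2 / (n + k : ℕ))) := by
  rw [gbar, CoMnP, CoMn, ← sum_sub_distrib, sum_mul]
  refine (abs_sum_le_sum_abs _ _).trans (sum_le_sum fun m _ => ?_)
  rw [← mul_comm (g m), ← mul_sub, abs_mul, mul_assoc]
  exact mul_le_mul_of_nonneg_left (abs_nu_mul_nuSub_div_nu_sub_bern_le hpos hN μ m) (abs_nonneg _)

end Bernstein

section Extension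

variable {X : Type*} [Fintype X] [DecidableEq X] {Q : ∀ n : ℕ, (CVec X n → ℝ) → ℝ}

theorem QTimeConsistent.eq_gbar (htc : QTimeConsistent Q) {n : ℕ} (hn : 1 ≤ n) (k : ℕ)
    (g : CVec X n → ℝ) : Q n g = Q (n + k) (gbar g) := by
  rw [htc n hn k g]
  congr 1
  funext μ
  exact sum_congr rfl fun m _ => by ring

theorem QTimeConsistent.exists_lift (htc : QTimeConsistent Q) {n N : ℕ} (hn : 1 ≤ n)
    (hnN : n ≤ N) (b : CVec X n → ℝ) :
    ∃ c : CVec X N → ℝ, Q N c = Q n b ∧ ∀ θ, CoMnP c θ = CoMnP b θ := by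
  obtain ⟨k, rfl⟩ := Nat.exists_eq_add_of_le hnN
  exact ⟨gbar b, (htc.eq_gbar hn k b).symm, CoMnP_gbar b⟩

open Classical in
noncomputable def polyExtension (Q : ∀ n : ℕ, (CVec X n → ℝ) → ℝ) (p : SimplexPt X → ℝ) : ℝ :=
  if h : IsPolyGamble p then Q h.choose h.choose_spec.2.choose else 0

variable [Nonempty X]

instance : Nonempty (SimplexPt X) :=
  ⟨⟨fun x => if x = Classical.arbitrary X then 1 else 0,
    fun x => by dsimp only; split_ifs <;> norm_num, by simp⟩⟩

theorem sInf_range_CoMnP_le (hcoh : ∀ n : ℕ, 1 ≤ n → LowerPrevCoherent (Q n))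
    (htc : QTimeConsistent Q) {n : ℕ} (hn : 1 ≤ n) (g : CVec X n → ℝ) :
    sInf (Set.range (CoMnP g)) ≤ Q n g := by
  refine le_of_forall_pos_le_add fun ε hε => ?_
  set C := (∑ m, |g m| * nu m) * (4 * n ^ 2)
  obtain ⟨k₀, hk₀⟩ := exists_nat_gt (C / ε)
  set k := k₀ + 2 * n ^ 2
  have hN : 2 * n ^ 2 ≤ n + k := by omega
  have hpos : 0 < n + k := by omega
  have herr : (∑ m, |g m| * nu m) * (4 * (n ^ 2 / (n + k : ℕ))) ≤ ε := by
    have hk₀N : (k₀ : ℝ) ≤ (n + k : ℕ) := by exact_mod_cast (by omega : k₀ ≤ n + k)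
    rw [← mul_div_assoc, ← mul_div_assoc, div_le_iff₀ (Nat.cast_pos.2 hpos), ← div_le_iff₀' hε]
    linarith
  have hgrid : sInf (Set.range (CoMnP g)) - ε ≤ sInf (Set.range (gbar g : CVec X (n + k) → ℝ)) :=
    le_csInf (Set.range_nonempty _) <| Set.forall_mem_range.2 fun μ => by
      have h1 := csInf_le (bddBelow_range_CoMnP g) (Set.mem_range_self (freqPt hpos μ))
      have h2 := (abs_le.1 (abs_gbar_sub_CoMnP_freqPt_le hpos hN g μ)).1
      linarith
  rw [htc.eq_gbar hn k g]
  linarith [(hcoh (n + k) (by omega)).1 (gbar g)]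

theorem le_of_CoMnP_le (hcoh : ∀ n : ℕ, 1 ≤ n → LowerPrevCoherent (Q n))
    (htc : QTimeConsistent Q) {n : ℕ} (hn : 1 ≤ n) {f g : CVec X n → ℝ}
    (hfg : ∀ θ, CoMnP f θ ≤ CoMnP g θ) : Q n f ≤ Q n g := by
  have hnonneg : 0 ≤ Q n (g - f) :=
    (le_csInf (Set.range_nonempty _) (Set.forall_mem_range.2 fun θ => by
      rw [CoMnP_sub]; linarith [hfg θ])).trans (sInf_range_CoMnP_le hcoh htc hn _)
  have hsuper := (hcoh n hn).2.2 f (g - f)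
  rw [add_sub_cancel] at hsuper
  linarith

theorem eq_of_CoMnP_eq (hcoh : ∀ n : ℕ, 1 ≤ n → LowerPrevCoherent (Q n))
    (htc : QTimeConsistent Q) {n n' : ℕ} (hn : 1 ≤ n) (hn' : 1 ≤ n')
    {b : CVec X n → ℝ} {b' : CVec X n' → ℝ} (hbb' : ∀ θ, CoMnP b θ = CoMnP b' θ) :
    Q n b = Q n' b' := by
  obtain ⟨c, hc, hcb⟩ := htc.exists_lift hn (Nat.le_add_right n n') b
  obtain ⟨c', hc', hcb'⟩ := htc.exists_lift hn' (Nat.le_add_left n' n) b'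
  have hcc' : ∀ θ, CoMnP c θ = CoMnP c' θ := fun θ => by rw [hcb, hcb', hbb']
  rw [← hc, ← hc']
  exact le_antisymm (le_of_CoMnP_le hcoh htc (by omega) fun θ => (hcc' θ).le)
    (le_of_CoMnP_le hcoh htc (by omega) fun θ => (hcc' θ).ge)

theorem polyExtension_eq (hcoh : ∀ n : ℕ, 1 ≤ n → LowerPrevCoherent (Q n))
    (htc : QTimeConsistent Q) {n : ℕ} (hn : 1 ≤ n) (b : CVec X n → ℝ) {p : SimplexPt X → ℝ}
    (hp : ∀ θ, p θ = CoMnP b θ) : polyExtension Q p = Q n b := by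
  have hpoly : IsPolyGamble p := ⟨n, hn, b, funext hp⟩
  rw [polyExtension, dif_pos hpoly]
  exact eq_of_CoMnP_eq hcoh htc hpoly.choose_spec.1 hn fun θ => by
    rw [← congrFun hpoly.choose_spec.2.choose_spec θ, hp θ]

theorem coherentOnPoly_polyExtension (hcoh : ∀ n : ℕ, 1 ≤ n → LowerPrevCoherent (Q n))
    (htc : QTimeConsistent Q) : CoherentOnPoly (polyExtension Q) := by
  have hS {n : ℕ} (hn : 1 ≤ n) (b : CVec X n → ℝ) {p : SimplexPt X → ℝ}
      (hp : ∀ θ, p θ = CoMnP b θ) : polyExtension Q p = Q n b :=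
    polyExtension_eq hcoh htc hn b hp
  refine ⟨?_, ?_, ?_⟩
  · rintro _ ⟨n, hn, b, rfl⟩
    rw [hS hn b fun θ => rfl]
    exact sInf_range_CoMnP_le hcoh htc hn b
  · rintro _ ⟨n, hn, b, rfl⟩ l hl
    rw [hS hn b fun θ => rfl, hS hn _ fun θ => (CoMnP_const_mul l b θ).symm]
    exact (hcoh n hn).2.1 b l hl
  · rintro _ _ ⟨n, hn, b, rfl⟩ ⟨n', hn', b', rfl⟩
    obtain ⟨c, hc, hcb⟩ := htc.exists_lift hn (Nat.le_add_right n n') b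
    obtain ⟨c', hc', hcb'⟩ := htc.exists_lift hn' (Nat.le_add_left n' n) b'
    rw [hS hn b fun θ => rfl, hS hn' b' fun θ => rfl, ← hc, ← hc',
      hS (by omega) (c + c') fun θ => by rw [CoMnP_add, hcb, hcb']; rfl]
    exact (hcoh _ (by omega)).2.2 c c'

end Extension

/-- a time consistent family of coherent count lower previsions induces a
well-defined functional `S` on the polynomial gambles, `S(p) := Q^n(b)` for any Bernstein
representation `p = ∑_m b(m) B_m`, and `S` is a coherent lower prevision on `𝒱(Σ_X)`. -/
theorem stmt10 {X : Type*} [Fintype X] [DecidableEq X] [Nonempty X]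
    (Q : ∀ n : ℕ, (CVec X n → ℝ) → ℝ)
    (hcoh : ∀ n : ℕ, 1 ≤ n → LowerPrevCoherent (Q n))
    (htc : QTimeConsistent Q) :
    ∃ S : (SimplexPt X → ℝ) → ℝ,
      (∀ (n : ℕ), 1 ≤ n → ∀ (b : CVec X n → ℝ) (p : SimplexPt X → ℝ),
        (∀ θ : SimplexPt X, p θ = CoMnP b θ) → S p = Q n b) ∧
      CoherentOnPoly S :=
  ⟨polyExtension Q, fun _ hn b _ hp => polyExtension_eq hcoh htc hn b hp,
    coherentOnPoly_polyExtension hcoh htc⟩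
end
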